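/- arXiv:1904.10686 — 2 statements merged into one kernel-verified Lean document; each statement's English description precedes it below -/
import Mathlib

section
/- Let H be a finite group. Assume that (1) the commutator subgroup [H,H] of H is nilpotent, and (2) for every pair of distinct primes p and q, every element of H whose order is a power of p commutes with every element of [H,H] whose order is a power of q. Then H is nilpotent. -/
open Subgroup Pointwise
open scoped commutatorElement

/-- Elements of a `p`-subgroup have `p`-power order. -/
lemma aux_ppow_order {G : Type*} [Group G] {p : ℕ} (hp : p.Prime) {Q : Subgroup G}
    (hQ : IsPGroup p Q) {x : G} (hx : x ∈ Q) : ∃ m : ℕ, orderOf x = p ^ m := by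
  obtain ⟨k, hk⟩ := hQ ⟨x, hx⟩
  have hx1 : x ^ p ^ k = 1 := by
    have := congrArg (Subgroup.subtype Q) hk
    simpa using this
  obtain ⟨m, _, hm⟩ := (Nat.dvd_prime_pow hp).mp (orderOf_dvd_of_pow_eq_one hx1)
  exact ⟨m, hm⟩

/-- A normal `p`-subgroup is contained in every Sylow `p`-subgroup. -/
lemma aux_normal_le_sylow {G : Type*} [Group G] [Finite G] {p : ℕ} [Fact p.Prime]
    {Q : Subgroup G} (hQ : IsPGroup p Q) (hQn : Q.Normal) (P : Sylow p G) : Q ≤ P := by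
  obtain ⟨R, hR⟩ := hQ.exists_le_sylow
  obtain ⟨g, hg⟩ := MulAction.exists_smul_eq G R P
  have h1 : Q = MulAut.conj g • Q := (Subgroup.Normal.conj_smul_eq_self g Q).symm
  calc Q = MulAut.conj g • Q := h1
    _ ≤ MulAut.conj g • (R : Subgroup G) := by
        exact Subgroup.pointwise_smul_le_pointwise_smul_iff.mpr hR
    _ = ((g • R : Sylow p G) : Subgroup G) := rfl
    _ = P := by rw [hg]

/-- Let `H` be a finite group. If the commutator subgroup `[H,H]` is
nilpotent, and for every pair of distinct primes `p` and `q` every `p`-element of `H`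
commutes with every `q`-element of `[H,H]`, then `H` is nilpotent. -/
theorem nilpotent_of_commutator_nilpotent_and_coprime_commuting
    {H : Type*} [Group H] [Finite H]
    (h1 : Group.IsNilpotent ↥(commutator H))
    (h2 : ∀ p q : ℕ, p.Prime → q.Prime → p ≠ q →
      ∀ z : H, (∃ m : ℕ, orderOf z = p ^ m) →
      ∀ w : H, w ∈ commutator H → (∃ m : ℕ, orderOf w = q ^ m) →
      Commute z w) :
    Group.IsNilpotent H := by
  refine ((isNilpotent_of_finite_tfae (G := H)).out 3 0).mp ?_
  intro p hp P
  -- Sylow subgroups of the commutator subgroup are normal there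
  have hSylNorm : ∀ (q : ℕ) (_ : Fact q.Prime) (Q : Sylow q ↥(commutator H)),
      (↑Q : Subgroup ↥(commutator H)).Normal :=
    ((isNilpotent_of_finite_tfae (G := ↥(commutator H))).out 0 3).mp h1
  -- choose a Sylow subgroup of the commutator subgroup for each prime
  let S : ∀ q : {q : ℕ // q.Prime}, Sylow q.1 ↥(commutator H) := fun q =>
    haveI : Fact q.1.Prime := ⟨q.2⟩
    Classical.arbitrary _
  -- the chosen Sylow subgroups generate the commutator subgroup
  have hJ : (⨆ q : {q : ℕ // q.Prime}, ((S q : Subgroup ↥(commutator H)))) = ⊤ := by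
    rw [← Subgroup.index_eq_one]
    by_contra hne
    obtain ⟨r, hr, hrd⟩ := Nat.exists_prime_and_dvd hne
    haveI : Fact r.Prime := ⟨hr⟩
    have hle : ((S ⟨r, hr⟩ : Subgroup ↥(commutator H))) ≤
        ⨆ q : {q : ℕ // q.Prime}, ((S q : Subgroup ↥(commutator H))) :=
      le_iSup (fun q : {q : ℕ // q.Prime} => ((S q : Subgroup ↥(commutator H)))) ⟨r, hr⟩
    have : r ∣ (S ⟨r, hr⟩ : Subgroup ↥(commutator H)).index :=
      hrd.trans (Subgroup.index_dvd_of_le hle)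
    exact (S ⟨r, hr⟩).not_dvd_index this
  -- key step: the commutator subgroup normalizes P
  have key : commutator H ≤ Subgroup.normalizer ((P : Subgroup H) : Set H) := by
    have hrange : commutator H =
        Subgroup.map (commutator H).subtype ⊤ := by
      rw [← MonoidHom.range_eq_map, Subgroup.range_subtype]
    rw [hrange, ← hJ, Subgroup.map_iSup]
    apply iSup_le
    intro q
    haveI : Fact q.1.Prime := ⟨q.2⟩
    have hwmem : ∀ w ∈ Subgroup.map (commutator H).subtype ((S q : Subgroup ↥(commutator H))),
        w ∈ commutator H := by
      intro w hw
      obtain ⟨w₀, _, rfl⟩ := hw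
      exact w₀.2
    have hpq : IsPGroup q.1 (Subgroup.map (commutator H).subtype
        ((S q : Subgroup ↥(commutator H)))) :=
      (S q).isPGroup'.map _
    by_cases hqp : q.1 = p
    · -- the Sylow p-subgroup of the commutator is normal in H, hence contained in P
      subst hqp
      haveI hnq : ((S q : Subgroup ↥(commutator H))).Normal := hSylNorm q.1 ⟨q.2⟩ (S q)
      haveI : ((S q : Subgroup ↥(commutator H))).Characteristic :=
        Sylow.characteristic_of_normal (S q) hnq
      have hnormal : (Subgroup.map (commutator H).subtype
          ((S q : Subgroup ↥(commutator H)))).Normal :=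
        ConjAct.normal_of_characteristic_of_normal
      exact le_trans (aux_normal_le_sylow hpq hnormal P) Subgroup.le_normalizer
    · -- q ≠ p : such elements centralize P by hypothesis
      intro w hw
      have hwq : ∃ m : ℕ, orderOf w = q.1 ^ m := aux_ppow_order q.2 hpq hw
      have hcomm : ∀ x ∈ (P : Subgroup H), Commute x w := fun x hx =>
        h2 p q.1 hp.out q.2 (fun h => hqp h.symm) x
          (aux_ppow_order hp.out P.isPGroup' hx) w (hwmem w hw) hwq
      rw [Subgroup.mem_normalizer_iff]
      intro h
      constructor
      · intro hh
        have := (hcomm h hh).eq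
        have : w * h * w⁻¹ = h := by
          rw [← (hcomm h hh).eq]; group
        rw [this]; exact hh
      · intro hh
        have : w * (w * h * w⁻¹) * w⁻¹ = w * h * w⁻¹ := by
          rw [← (hcomm _ hh).eq]; group
        have h' : w * h * w⁻¹ = h := by
          have := mul_left_cancel (a := w) (b := (w * h * w⁻¹) * w⁻¹) (c := h * w⁻¹) ?_
          · have := congrArg (· * w) this
            simpa [mul_assoc] using this
          · calc w * ((w * h * w⁻¹) * w⁻¹) = (w * (w * h * w⁻¹)) * w⁻¹ := by group
              _ = ((w * h * w⁻¹) * w) * w⁻¹ := by rw [(hcomm _ hh).eq]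
              _ = w * (h * w⁻¹) := by group
              _ = w * (h * w⁻¹) := rfl
        rw [← h']; exact hh
  -- the normalizer of P contains the commutator subgroup, hence is normal
  have hNnorm : (Subgroup.normalizer ((P : Subgroup H) : Set H)).Normal := by
    constructor
    intro n hn g
    have hc : ⁅g, n⁆ ∈ commutator H := by
      rw [_root_.commutator_def]
      exact Subgroup.commutator_mem_commutator (Subgroup.mem_top g) (Subgroup.mem_top n)
    have heq : g * n * g⁻¹ = ⁅g, n⁆ * n := by group
    rw [heq]
    exact mul_mem (key hc) hn
  exact P.normal_of_normalizer_normal hNnorm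
end

section
/- Let p be a prime and H a finite p-group of exponent p^r, with r ≥ 1. Let D be a division ring of characteristic zero that is a twisted group algebra L^α H over a field L (encoded as in the context), and suppose L contains a primitive p^r-th root of unity. Then H is abelian. -/
private lemma aux_root {D : Type*} [DivisionRing D] (ζ w : D) (n : ℕ) (hn : n ≠ 0)
    (hord : orderOf ζ = n) (hcomm : ζ * w = w * ζ) (hw : w ^ n = 1) :
    ∃ k : ℕ, w = ζ ^ k := by
  have hcs : ∀ x ∈ ({ζ, w} : Set D), ∀ y ∈ ({ζ, w} : Set D), x * y = y * x := by
    rintro x (rfl | rfl) y (rfl | rfl) <;> first | rfl | exact hcomm | exact hcomm.symm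
  letI : CommRing (Subring.closure ({ζ, w} : Set D)) := Subring.closureCommRingOfComm hcs
  haveI : NoZeroDivisors (Subring.closure ({ζ, w} : Set D)) := by
    constructor
    intro a b hab
    have h : (a : D) * b = 0 := by
      have := congrArg (Subtype.val) hab
      simpa using this
    rcases mul_eq_zero.mp h with h' | h'
    · exact Or.inl (Subtype.ext h')
    · exact Or.inr (Subtype.ext h')
  haveI : IsDomain (Subring.closure ({ζ, w} : Set D)) := NoZeroDivisors.to_isDomain _
  haveI : NeZero n := ⟨hn⟩
  have hζR : ζ ∈ Subring.closure ({ζ, w} : Set D) := Subring.subset_closure (by simp)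
  have hwR : w ∈ Subring.closure ({ζ, w} : Set D) := Subring.subset_closure (by simp)
  have hordR : orderOf (⟨ζ, hζR⟩ : Subring.closure ({ζ, w} : Set D)) = n := by
    rw [← hord]
    exact (orderOf_injective ((Subring.closure ({ζ, w} : Set D)).subtype.toMonoidHom) Subtype.coe_injective ⟨ζ, hζR⟩).symm
  have hprim : IsPrimitiveRoot (⟨ζ, hζR⟩ : Subring.closure ({ζ, w} : Set D)) n :=
    hordR ▸ IsPrimitiveRoot.orderOf _
  have hw' : (⟨w, hwR⟩ : Subring.closure ({ζ, w} : Set D)) ^ n = 1 :=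
    Subtype.ext (by push_cast; simpa using hw)
  obtain ⟨i, _, hi⟩ := hprim.eq_pow_of_pow_eq_one hw'
  refine ⟨i, ?_⟩
  have := congrArg (Subtype.val) hi
  push_cast at this
  simpa using this.symm

private lemma aux_disjoint {ι : Type*} [DecidableEq ι] {M : Type*} [AddCommGroup M]
    {𝒜 : ι → AddSubgroup M} (h : DirectSum.IsInternal 𝒜) {g g' : ι} (hgh : g ≠ g')
    {x : M} (hg : x ∈ 𝒜 g) (hh : x ∈ 𝒜 g') : x = 0 := by
  have h0 : (DirectSum.coeAddMonoidHom 𝒜) (DirectSum.of (fun i => 𝒜 i) g ⟨x, hg⟩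
      - DirectSum.of (fun i => 𝒜 i) g' ⟨x, hh⟩) = 0 := by
    rw [map_sub, DirectSum.coeAddMonoidHom_of, DirectSum.coeAddMonoidHom_of, sub_self]
  have h1 := h.injective (h0.trans (map_zero _).symm)
  rw [sub_eq_zero] at h1
  have h2 : (DirectSum.of (fun i => 𝒜 i) g ⟨x, hg⟩) g
      = (DirectSum.of (fun i => 𝒜 i) g' ⟨x, hh⟩) g := by rw [h1]
  rw [DirectSum.of_eq_same, DirectSum.of_eq_of_ne _ _ _ hgh] at h2
  exact Subtype.ext_iff.mp h2

private lemma aux_group {H : Type*} [Group H] [Finite H] (p r : ℕ) (hp : p.Prime)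
    (hexp : Monoid.exponent H = p ^ r)
    (hna : ¬ ∀ a b : H, a * b = b * a) :
    ∃ a b : H, a * b ≠ b * a ∧ (a * b * a⁻¹ * b⁻¹) ∈ Subgroup.center H ∧
      (a * b * a⁻¹ * b⁻¹) ^ p = 1 := by
  have hpg : IsPGroup p H := fun g => ⟨r, by rw [← hexp]; exact Monoid.pow_exponent_eq_one g⟩
  push_neg at hna
  obtain ⟨a₀, b₀, hab₀⟩ := hna
  have hb₀Z : b₀ ∉ Subgroup.center H := fun h => hab₀ ((Subgroup.mem_center_iff.mp h) a₀)
  haveI : Nontrivial (H ⧸ Subgroup.center H) := by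
    refine ⟨⟨(b₀ : H ⧸ Subgroup.center H), 1, ?_⟩⟩
    rw [Ne, QuotientGroup.eq_one_iff]
    exact hb₀Z
  have hpQ : IsPGroup p (H ⧸ Subgroup.center H) := hpg.to_quotient _
  haveI : Fact p.Prime := ⟨hp⟩
  haveI := hpQ.center_nontrivial
  obtain ⟨y, hy1⟩ := exists_ne (1 : Subgroup.center (H ⧸ Subgroup.center H))
  obtain ⟨b, hb⟩ := QuotientGroup.mk_surjective (y : H ⧸ Subgroup.center H)
  have key : ∀ x : H, x * b * x⁻¹ * b⁻¹ ∈ Subgroup.center H := by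
    intro x
    rw [← QuotientGroup.eq_one_iff]
    have hcast : ((x * b * x⁻¹ * b⁻¹ : H) : H ⧸ Subgroup.center H)
        = (x : H ⧸ Subgroup.center H) * (b : H ⧸ Subgroup.center H)
          * (x : H ⧸ Subgroup.center H)⁻¹ * (b : H ⧸ Subgroup.center H)⁻¹ := by
      rfl
    rw [hcast, hb]
    have hyc := Subgroup.mem_center_iff.mp y.2 (x : H ⧸ Subgroup.center H)
    rw [hyc]
    group
  have hbZ : b ∉ Subgroup.center H := by
    intro h
    apply hy1
    have : (y : H ⧸ Subgroup.center H) = 1 := by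
      rw [← hb, QuotientGroup.eq_one_iff]; exact h
    exact Subtype.ext this
  obtain ⟨a, ha⟩ : ∃ a : H, a * b ≠ b * a := by
    by_contra h; push_neg at h; exact hbZ (Subgroup.mem_center_iff.mpr h)
  have hcZ : a * b * a⁻¹ * b⁻¹ ∈ Subgroup.center H := key a
  have hc1 : a * b * a⁻¹ * b⁻¹ ≠ 1 := by
    intro h
    apply ha
    have h2 : a * b = (a * b * a⁻¹ * b⁻¹) * (b * a) := by group
    rw [h, one_mul] at h2; exact h2
  have hφ : ∀ n : ℕ, a ^ n * b * (a ^ n)⁻¹ * b⁻¹ = (a * b * a⁻¹ * b⁻¹) ^ n := by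
    intro n
    induction n with
    | zero => group
    | succ n ih =>
      have hcen : ∀ x : H, x * (a * b * a⁻¹ * b⁻¹) ^ n = (a * b * a⁻¹ * b⁻¹) ^ n * x :=
        fun x => Subgroup.mem_center_iff.mp (pow_mem hcZ n) x
      have e1 : a ^ n * b * (a ^ n)⁻¹ = (a * b * a⁻¹ * b⁻¹) ^ n * b := by
        rw [← ih]; group
      calc a ^ (n + 1) * b * (a ^ (n + 1))⁻¹ * b⁻¹
          = a * (a ^ n * b * (a ^ n)⁻¹) * a⁻¹ * b⁻¹ := by group
        _ = a * ((a * b * a⁻¹ * b⁻¹) ^ n * b) * a⁻¹ * b⁻¹ := by rw [e1]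
        _ = (a * (a * b * a⁻¹ * b⁻¹) ^ n) * b * a⁻¹ * b⁻¹ := by group
        _ = ((a * b * a⁻¹ * b⁻¹) ^ n * a) * b * a⁻¹ * b⁻¹ := by rw [hcen a]
        _ = (a * b * a⁻¹ * b⁻¹) ^ n * (a * b * a⁻¹ * b⁻¹) := by group
        _ = (a * b * a⁻¹ * b⁻¹) ^ (n + 1) := by rw [pow_succ]
  obtain ⟨k, hk⟩ := hpg (a * b * a⁻¹ * b⁻¹)
  obtain ⟨s, hsk, hs⟩ := (Nat.dvd_prime_pow hp).mp (orderOf_dvd_of_pow_eq_one hk)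
  have hs1 : 1 ≤ s := by
    rcases Nat.eq_zero_or_pos s with h0 | h
    · exfalso; apply hc1; rw [h0, pow_zero] at hs; exact orderOf_eq_one_iff.mp hs
    · exact h
  refine ⟨a ^ (p ^ (s - 1)), b, ?_, ?_, ?_⟩
  · intro h
    have hone : a ^ (p ^ (s - 1)) * b * (a ^ (p ^ (s - 1)))⁻¹ * b⁻¹ = 1 := by
      rw [h]; group
    rw [hφ] at hone
    have hdvd := orderOf_dvd_of_pow_eq_one hone
    rw [hs] at hdvd
    have hle := Nat.le_of_dvd (pow_pos hp.pos _) hdvd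
    exact absurd hle (not_le.mpr (Nat.pow_lt_pow_right hp.one_lt (Nat.sub_lt hs1 one_pos)))
  · rw [hφ]; exact pow_mem hcZ _
  · rw [hφ, ← pow_mul, ← pow_succ, Nat.sub_add_cancel hs1, ← hs, pow_orderOf_eq_one]



variable {H : Type*} [Group H] [DecidableEq H] {D : Type*} [DivisionRing D]

/-- A faithful `H`-grading on `D`: a family of additive subgroups forming an internal
direct sum decomposition, multiplicative, with all components nonzero. -/
structure IsFaithfulGrading (𝒜 : H → AddSubgroup D) : Prop where
  one_mem : (1 : D) ∈ 𝒜 1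
  mul_mem : ∀ {g h : H} {x y : D}, x ∈ 𝒜 g → y ∈ 𝒜 h → x * y ∈ 𝒜 (g * h)
  isInternal : DirectSum.IsInternal 𝒜
  faithful : ∀ g, 𝒜 g ≠ ⊥

/-- Let `p` be a prime and `H` a finite `p`-group of exponent `p ^ r`
with `r ≥ 1`.  Let `D` be a division ring of characteristic zero which is a twisted group
algebra `L^α H` over a field `L`:  `D` carries a faithful `H`-grading whose identity
component `L = D_e` is a subfield contained in the center of `D` and whose homogeneous
components are one-dimensional left `L`-vector spaces.  If `L` contains a primitive
`p ^ r`-th root of unity, then `H` is abelian. -/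
theorem abelian_of_twisted_group_algebra_division_ring_p_group
    [Finite H] [CharZero D]
    (p r : ℕ) (hp : p.Prime) (hr : 1 ≤ r) (hexp : Monoid.exponent H = p ^ r)
    (𝒜 : H → AddSubgroup D) (hG : IsFaithfulGrading 𝒜)
    -- `D_e = L` is a subfield of `D` contained in the center of `D`
    (hcentral : ∀ l ∈ 𝒜 1, l ∈ Subring.center D)
    (hinvL : ∀ l ∈ 𝒜 1, l⁻¹ ∈ 𝒜 1)
    -- every homogeneous component is a one-dimensional left `L`-vector space
    (honedim : ∀ h : H, ∃ x : D, x ≠ 0 ∧ x ∈ 𝒜 h ∧ ∀ y ∈ 𝒜 h, ∃ l ∈ 𝒜 1, y = l * x)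
    -- `L` contains a primitive `p ^ r`-th root of unity
    (ζ : D) (hζL : ζ ∈ 𝒜 1) (hζ : orderOf ζ = p ^ r) :
    ∀ a b : H, a * b = b * a := by
  by_cases h21 : p = 2 ∧ r = 1
  · -- exponent 2: elementary abelian
    obtain ⟨hp2, hr1⟩ := h21
    have h2 : ∀ g : H, g * g = 1 := by
      intro g
      have hg := Monoid.pow_exponent_eq_one g
      rw [hexp, hp2, hr1, pow_one, pow_two] at hg
      exact hg
    intro a b
    have hinv : ∀ g : H, g⁻¹ = g := fun g => inv_eq_of_mul_eq_one_right (h2 g)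
    calc a * b = (a * b)⁻¹ := (hinv _).symm
      _ = b⁻¹ * a⁻¹ := mul_inv_rev a b
      _ = b * a := by rw [hinv a, hinv b]
  · by_contra hna
    obtain ⟨a, b, hab, hcZ, hcp⟩ := aux_group p r hp hexp hna
    have hcomm_ca : (a * b * a⁻¹ * b⁻¹) * a = a * (a * b * a⁻¹ * b⁻¹) :=
      (Subgroup.mem_center_iff.mp hcZ a).symm
    have hc1 : a * b * a⁻¹ * b⁻¹ ≠ 1 := by
      intro h
      apply hab
      have h2 : a * b = (a * b * a⁻¹ * b⁻¹) * (b * a) := by group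
      rw [h, one_mul] at h2; exact h2
    -- central scalars
    have hcen : ∀ {x : D}, x ∈ 𝒜 1 → ∀ y : D, y * x = x * y := fun hx y =>
      Subring.mem_center_iff.mp (hcentral _ hx) y
    have hc_mul : ∀ {x : D}, x ∈ 𝒜 1 → ∀ y z : D, y * (x * z) = x * (y * z) := by
      intro x hx y z; rw [← mul_assoc, hcen hx y, mul_assoc]
    -- inverses of homogeneous elements
    have hinv_mem : ∀ {g : H} {x : D}, x ∈ 𝒜 g → x ≠ 0 → x⁻¹ ∈ 𝒜 g⁻¹ := by
      intro g x hx hx0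
      obtain ⟨y, hy0, hyA, -⟩ := honedim g⁻¹
      have hxy : x * y ∈ 𝒜 1 := by
        have := hG.mul_mem hx hyA; rwa [mul_inv_cancel] at this
      have hxy0 : x * y ≠ 0 := mul_ne_zero hx0 hy0
      have h1 : x * (y * (x * y)⁻¹) = 1 := by
        rw [← mul_assoc, mul_inv_cancel₀ hxy0]
      have hmem : y * (x * y)⁻¹ ∈ 𝒜 g⁻¹ := by
        have := hG.mul_mem hyA (hinvL _ hxy); rwa [mul_one] at this
      rw [inv_eq_of_mul_eq_one_right h1]; exact hmem
    -- powers of homogeneous elements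
    have hpow_mem : ∀ {g : H} {x : D}, x ∈ 𝒜 g → ∀ n : ℕ, x ^ n ∈ 𝒜 (g ^ n) := by
      intro g x hx n
      induction n with
      | zero => rw [pow_zero, pow_zero]; exact hG.one_mem
      | succ n ih => rw [pow_succ, pow_succ]; exact hG.mul_mem ih hx
    obtain ⟨u, hu0, huA, -⟩ := honedim a
    obtain ⟨v, hv0, hvA, -⟩ := honedim b
    have hw0 : u * v * u⁻¹ * v⁻¹ ≠ 0 :=
      mul_ne_zero (mul_ne_zero (mul_ne_zero hu0 hv0) (inv_ne_zero hu0)) (inv_ne_zero hv0)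
    have hwA : u * v * u⁻¹ * v⁻¹ ∈ 𝒜 (a * b * a⁻¹ * b⁻¹) :=
      hG.mul_mem (hG.mul_mem (hG.mul_mem huA hvA) (hinv_mem huA hu0)) (hinv_mem hvA hv0)
    set c : H := a * b * a⁻¹ * b⁻¹ with hcdef
    set w : D := u * v * u⁻¹ * v⁻¹ with hwdef
    have huv : w * (v * u) = u * v := by
      rw [hwdef, mul_assoc (u * v * u⁻¹) v⁻¹ (v * u), ← mul_assoc v⁻¹ v u,
        inv_mul_cancel₀ hv0, one_mul, mul_assoc (u * v) u⁻¹ u, inv_mul_cancel₀ hu0, mul_one]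
    -- the scalar β with u * w = β * (w * u)
    obtain ⟨x, hx0, hxA, hxspan⟩ := honedim (c * a)
    have hwu : w * u ∈ 𝒜 (c * a) := hG.mul_mem hwA huA
    have huw : u * w ∈ 𝒜 (c * a) := by
      have := hG.mul_mem huA hwA; rwa [← hcomm_ca] at this
    obtain ⟨l₁, hl₁, e₁⟩ := hxspan _ hwu
    obtain ⟨l₂, hl₂, e₂⟩ := hxspan _ huw
    have hwu0 : w * u ≠ 0 := mul_ne_zero hw0 hu0
    have hl₁0 : l₁ ≠ 0 := fun h => hwu0 (by rw [e₁, h, zero_mul])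
    set β : D := l₂ * l₁⁻¹ with hβdef
    have hβA : β ∈ 𝒜 1 := by
      have := hG.mul_mem hl₂ (hinvL _ hl₁); rwa [mul_one] at this
    have hβ : u * w = β * (w * u) := by
      rw [e₂, e₁, hβdef, mul_assoc, ← mul_assoc l₁⁻¹ l₁ x, inv_mul_cancel₀ hl₁0, one_mul]
    have hβpowA : ∀ n : ℕ, β ^ n ∈ 𝒜 1 := fun n => by simpa using hpow_mem hβA n
    -- iteration 1 : u * w^n = β^n * (w^n * u)
    have hiter1 : ∀ n : ℕ, u * w ^ n = β ^ n * (w ^ n * u) := by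
      intro n
      induction n with
      | zero => simp
      | succ n ih =>
        calc u * w ^ (n + 1)
            = u * w ^ n * w := by rw [pow_succ, ← mul_assoc]
          _ = β ^ n * (w ^ n * u) * w := by rw [ih]
          _ = β ^ n * (w ^ n * (u * w)) := by rw [mul_assoc, mul_assoc]
          _ = β ^ n * (w ^ n * (β * (w * u))) := by rw [hβ]
          _ = β ^ n * (β * (w ^ n * (w * u))) := by rw [hc_mul hβA (w ^ n) (w * u)]
          _ = (β ^ n * β) * (w ^ n * (w * u)) := by rw [← mul_assoc]
          _ = (β ^ n * β) * ((w ^ n * w) * u) := by rw [← mul_assoc (w ^ n) w u]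
          _ = β ^ (n + 1) * (w ^ (n + 1) * u) := by rw [pow_succ, pow_succ]
    -- β ^ p = 1
    have hwpA : w ^ p ∈ 𝒜 1 := by
      have := hpow_mem hwA p; rwa [hcp] at this
    have hβp : β ^ p = 1 := by
      have h1 : u * w ^ p = w ^ p * u := hcen hwpA u
      have h2 := hiter1 p
      rw [h1] at h2
      have h3 : w ^ p * u ≠ 0 := mul_ne_zero (pow_ne_zero _ hw0) hu0
      exact mul_right_cancel₀ h3 (h2.symm.trans (one_mul _).symm)
    -- iteration 2
    have hiter2 : ∀ n : ℕ, u ^ n * v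
        = β ^ (∑ i ∈ Finset.range n, i) * (w ^ n * (v * u ^ n)) := by
      intro n
      induction n with
      | zero => simp
      | succ n ih =>
        calc u ^ (n + 1) * v
            = u * (u ^ n * v) := by rw [pow_succ', mul_assoc]
          _ = u * (β ^ (∑ i ∈ Finset.range n, i) * (w ^ n * (v * u ^ n))) := by rw [ih]
          _ = β ^ (∑ i ∈ Finset.range n, i) * (u * (w ^ n * (v * u ^ n))) :=
              hc_mul (hβpowA _) u _
          _ = β ^ (∑ i ∈ Finset.range n, i) * ((u * w ^ n) * (v * u ^ n)) := by
              rw [← mul_assoc u (w ^ n)]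
          _ = β ^ (∑ i ∈ Finset.range n, i) * ((β ^ n * (w ^ n * u)) * (v * u ^ n)) := by
              rw [hiter1 n]
          _ = β ^ (∑ i ∈ Finset.range n, i) * (β ^ n * ((w ^ n * u) * (v * u ^ n))) := by
              rw [mul_assoc (β ^ n)]
          _ = (β ^ (∑ i ∈ Finset.range n, i) * β ^ n) * ((w ^ n * u) * (v * u ^ n)) := by
              rw [← mul_assoc]
          _ = β ^ ((∑ i ∈ Finset.range n, i) + n) * (w ^ n * ((u * v) * u ^ n)) := by
              rw [← pow_add, mul_assoc (w ^ n) u, ← mul_assoc u v]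
          _ = β ^ ((∑ i ∈ Finset.range n, i) + n) * (w ^ n * ((w * (v * u)) * u ^ n)) := by
              rw [huv]
          _ = β ^ ((∑ i ∈ Finset.range n, i) + n) * (w ^ (n + 1) * (v * u ^ (n + 1))) := by
              rw [mul_assoc w (v * u) (u ^ n), ← mul_assoc (w ^ n) w, ← pow_succ,
                mul_assoc v u (u ^ n), ← pow_succ']
          _ = β ^ (∑ i ∈ Finset.range (n + 1), i) * (w ^ (n + 1) * (v * u ^ (n + 1))) := by
              rw [Finset.sum_range_succ]
    -- divisibility p ∣ ∑ i < p^r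
    have hdvd : p ∣ ∑ i ∈ Finset.range (p ^ r), i := by
      have h2T : (∑ i ∈ Finset.range (p ^ r), i) * 2 = p ^ r * (p ^ r - 1) :=
        Finset.sum_range_id_mul_two (p ^ r)
      rcases hp.eq_two_or_odd' with hp2 | hodd
      · have hr2 : 2 ≤ r := by
          rcases Nat.lt_or_ge r 2 with h | h
          · exfalso; exact h21 ⟨hp2, by omega⟩
          · exact h
        subst hp2
        have hsplit : (2 : ℕ) ^ r = 2 ^ (r - 1) * 2 := by
          rw [← pow_succ, Nat.sub_add_cancel (by omega : 1 ≤ r)]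
        have hT : (∑ i ∈ Finset.range (2 ^ r), i) = 2 ^ (r - 1) * (2 ^ r - 1) := by
          apply Nat.eq_of_mul_eq_mul_right (by norm_num : 0 < 2)
          rw [h2T, hsplit]; ring
        rw [hT]
        exact Dvd.dvd.mul_right (dvd_pow_self 2 (by omega : r - 1 ≠ 0)) _
      · have hpT2 : p ∣ (∑ i ∈ Finset.range (p ^ r), i) * 2 := by
          rw [h2T]
          exact Dvd.dvd.mul_right (dvd_pow_self p (by omega : r ≠ 0)) _
        rcases (Nat.Prime.dvd_mul hp).mp hpT2 with h | h
        · exact h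
        · exfalso
          have := (Nat.prime_dvd_prime_iff_eq hp Nat.prime_two).mp h
          rw [this] at hodd
          rw [Nat.odd_iff] at hodd
          omega
    obtain ⟨k, hk⟩ := hdvd
    have hβT : β ^ (∑ i ∈ Finset.range (p ^ r), i) = 1 := by
      rw [hk, pow_mul, hβp, one_pow]
    -- conclude w ^ (p ^ r) = 1
    have hNa : a ^ p ^ r = 1 := by rw [← hexp]; exact Monoid.pow_exponent_eq_one a
    have huNA : u ^ p ^ r ∈ 𝒜 1 := by
      have := hpow_mem huA (p ^ r); rwa [hNa] at this
    have h2 := hiter2 (p ^ r)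
    rw [hβT, one_mul] at h2
    have h3 : v * u ^ p ^ r = u ^ p ^ r * v := hcen huNA v
    rw [← h3] at h2
    have h4 : v * u ^ p ^ r ≠ 0 := mul_ne_zero hv0 (pow_ne_zero _ hu0)
    have hwN : w ^ p ^ r = 1 := mul_right_cancel₀ h4 (h2.symm.trans (one_mul _).symm)
    -- w is a power of ζ, contradiction with the grading
    have hζc : ζ * w = w * ζ := (hcen hζL w).symm
    obtain ⟨k', hk'⟩ := aux_root ζ w (p ^ r) (pow_pos hp.pos r).ne' hζ hζc hwN
    have hζkA : ζ ^ k' ∈ 𝒜 1 := by simpa using hpow_mem hζL k'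
    have hwA1 : w ∈ 𝒜 (1 : H) := by rw [hk']; exact hζkA
    exact hw0 (aux_disjoint hG.isInternal hc1 hwA hwA1)
end
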